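/- Let b = ℓ^{-1} ∘ f_j ∘ ℓ on the Ulam–Harris tree. For every node v in zone z ≤ j with z ≥ 1, the heights satisfy ht(v) + ht(b(v)) = z + 1. In particular, if z(v) = 4k and ht(v) ≤ 2k + 1, then ht(b(v)) ≥ 2k. -/

import Mathlib

/-- The zone of an Ulam–Harris node is the sum of its entries. -/
def zone (u : List ℕ+) : ℕ := (u.map (fun m : ℕ+ => (m : ℕ))).sum

/-- The child-sibling encoding `ℓ`. -/
def ell (u : List ℕ+) : List Bool :=
  u.flatMap (fun m => true :: List.replicate ((m : ℕ) - 1) false)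

/-- `f_j` complements coordinates `2` through `j` of a binary string. -/
def fstr (j : ℕ) (s : List Bool) : List Bool :=
  s.mapIdx (fun i b => if 0 < i ∧ i < j then !b else b)

/-!
The string `ℓ(v)` has length `z(v)`, one `1` per entry of `v`, and starts with a `1`. When
`z(v) ≤ j`, the flip `f_j` keeps that leading `1` and complements everything after it, so the
`1`s of `ℓ(v)` and of `f_j(ℓ(v))` together count the leading `1` twice and every other position
once: `ht(v) + ht(b(v)) = z(v) + 1`.
-/

lemma ell_cons (m : ℕ+) (u : List ℕ+) :
    ell (m :: u) = true :: (List.replicate ((m : ℕ) - 1) false ++ ell u) := by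
  simp [ell]

lemma length_ell (u : List ℕ+) : (ell u).length = zone u := by
  induction u with
  | nil => rfl
  | cons m u ih =>
    rw [ell_cons, List.length_cons, List.length_append, List.length_replicate, ih]
    simp only [zone, List.map_cons, List.sum_cons]
    have := m.pos
    omega

lemma count_true_ell (u : List ℕ+) : (ell u).count true = u.length := by
  induction u with
  | nil => rfl
  | cons m u ih => simp [ell_cons, List.count_append, List.count_replicate, ih]

lemma count_true_map_not (t : List Bool) : (t.map (!·)).count true = t.count false := by
  induction t with
  | nil => rfl
  | cons a t ih => cases a <;> simp [ih]

lemma fstr_cons_of_length_lt {j : ℕ} (a : Bool) {t : List Bool} (h : t.length < j) :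
    fstr j (a :: t) = a :: t.map (!·) := by
  refine List.ext_getElem (by simp [fstr]) fun i hi _ => ?_
  rcases i with _ | i
  · simp [fstr]
  · simp only [List.length_cons, fstr, List.length_mapIdx] at hi
    simp [fstr, show i + 1 < j by omega]

lemma count_true_add_count_true_fstr {j : ℕ} {t : List Bool} (h : t.length < j) :
    (true :: t).count true + (fstr j (true :: t)).count true = t.length + 2 := by
  rw [fstr_cons_of_length_lt true h]
  simp only [List.count_cons_self, count_true_map_not]
  have := List.count_true_add_count_false t
  omega

lemma length_add_length_of_ell_eq_fstr {j : ℕ} {v w : List ℕ+}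
    (hw : ell w = fstr j (ell v)) (hz : 1 ≤ zone v) (hzj : zone v ≤ j) :
    v.length + w.length = zone v + 1 := by
  obtain _ | ⟨m, u⟩ := v
  · simp [zone] at hz
  · obtain ⟨t, ht⟩ : ∃ t, ell (m :: u) = true :: t := ⟨_, ell_cons m u⟩
    have hlen : t.length + 1 = zone (m :: u) := by
      rw [← length_ell, ht, List.length_cons]
    rw [← count_true_ell, ← count_true_ell, hw, ht,
      count_true_add_count_true_fstr (by omega)]
    omega

theorem height_add_height_flip_general (j : ℕ) (b : List ℕ+ → List ℕ+)
    (hb : ∀ v, ell (b v) = fstr j (ell v)) :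
    (∀ v : List ℕ+, 1 ≤ zone v → zone v ≤ j →
      v.length + (b v).length = zone v + 1) ∧
    (∀ k : ℕ, ∀ v : List ℕ+, j = 4 * k → zone v = 4 * k → v.length ≤ 2 * k + 1 →
      2 * k ≤ (b v).length) := by
  refine ⟨fun v => length_add_length_of_ell_eq_fstr (hb v), fun k v hjk hz hv => ?_⟩
  rcases Nat.eq_zero_or_pos k with rfl | hk
  · exact Nat.zero_le _
  · have := length_add_length_of_ell_eq_fstr (hb v) (by omega) (by omega)
    omega

/-- Let `b = ℓ⁻¹ ∘ f_j ∘ ℓ`. For every node `v` in zone `z` with `1 ≤ z ≤ j`, the heights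
(sequence lengths) satisfy `ht(v) + ht(b(v)) = z + 1`.  In particular, with `j = 4k`, if
`z(v) = 4k` and `ht(v) ≤ 2k + 1` then `ht(b(v)) ≥ 2k`. -/
theorem height_add_height_flip (j : ℕ) (hj : 2 ≤ j) (b : List ℕ+ → List ℕ+)
    (hb : ∀ v, ell (b v) = fstr j (ell v)) :
    (∀ v : List ℕ+, 1 ≤ zone v → zone v ≤ j →
      v.length + (b v).length = zone v + 1) ∧
    (∀ k : ℕ, ∀ v : List ℕ+, j = 4 * k → zone v = 4 * k → v.length ≤ 2 * k + 1 →
      2 * k ≤ (b v).length) :=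
  height_add_height_flip_general j b hb
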